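/- A group containing a free subgroup of rank 2 is not amenable. -/
import Mathlib

/-- A left-invariant finitely additive probability measure on a group `G`
(an "invariant mean" on subsets of `G`). -/
structure LeftInvariantMean (G : Type*) [Group G] where
  μ : Set G → ℝ
  nonneg : ∀ A : Set G, 0 ≤ μ A
  total : μ Set.univ = 1
  additive : ∀ A B : Set G, Disjoint A B → μ (A ∪ B) = μ A + μ B
  invariant : ∀ (g : G) (A : Set G), μ ((g * ·) '' A) = μ A

/-- A group is amenable if it admits a left-invariant finitely additive probability
measure. -/
def IsAmenable (G : Type*) [Group G] : Prop := Nonempty (LeftInvariantMean G)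

namespace LeftInvariantMean

variable {G : Type*} [Group G] (m : LeftInvariantMean G)

lemma mono {A B : Set G} (h : A ⊆ B) : m.μ A ≤ m.μ B := by
  have hB : B = A ∪ (B \ A) := (Set.union_diff_cancel h).symm
  have h2 := m.additive A (B \ A) Set.disjoint_sdiff_right
  have h0 := m.nonneg (B \ A)
  rw [← hB] at h2
  linarith

lemma subadd (A B : Set G) : m.μ (A ∪ B) ≤ m.μ A + m.μ B := by
  have h1 : A ∪ B = A ∪ (B \ A) := by rw [Set.union_diff_self]
  have h2 := m.additive A (B \ A) Set.disjoint_sdiff_right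
  have h3 := m.mono (Set.diff_subset : B \ A ⊆ B)
  rw [h1, h2]; linarith

/-- Pull a mean back along a group isomorphism. -/
noncomputable def ofMulEquiv {K : Type*} [Group K] (e : G ≃* K)
    (m : LeftInvariantMean G) : LeftInvariantMean K where
  μ A := m.μ (e ⁻¹' A)
  nonneg A := m.nonneg _
  total := by simpa using m.total
  additive A B h := by
    show m.μ (e ⁻¹' (A ∪ B)) = m.μ (e ⁻¹' A) + m.μ (e ⁻¹' B)
    rw [Set.preimage_union]
    exact m.additive _ _ (h.preimage e)
  invariant k A := by
    show m.μ (e ⁻¹' ((k * ·) '' A)) = m.μ (e ⁻¹' A)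
    have hset : e ⁻¹' ((k * ·) '' A) = (e.symm k * ·) '' (e ⁻¹' A) := by
      ext x
      constructor
      · rintro ⟨a, ha, hax⟩
        have hax' : k * a = e x := hax
        refine ⟨e.symm a, by simpa using ha, ?_⟩
        have : x = e.symm (k * a) := by rw [hax']; simp
        simp [this, map_mul]
      · rintro ⟨y, hy, rfl⟩
        exact ⟨e y, hy, by simp [map_mul]⟩
    rw [hset, m.invariant]

/-- Restrict a mean to a subgroup, using right coset representatives. -/
noncomputable def toSubgroup (H : Subgroup G) (m : LeftInvariantMean G) :
    LeftInvariantMean H := by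
  classical
  let r : G → G := fun g => Quotient.out (Quotient.mk (QuotientGroup.rightRel H) g)
  have hr : ∀ g : G, g * (r g)⁻¹ ∈ H := fun g => by
    have := Quotient.mk_out (s := QuotientGroup.rightRel H) g
    exact (QuotientGroup.rightRel_apply.mp this)
  have hrmul : ∀ (h : H) (g : G), r ((h : G) * g) = r g := by
    intro h g
    have : Quotient.mk (QuotientGroup.rightRel H) ((h : G) * g)
        = Quotient.mk (QuotientGroup.rightRel H) g := by
      apply Quotient.sound
      refine QuotientGroup.rightRel_apply.mpr ?_
      simp [h.2]
    simp only [r, this]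
  let φ : G → H := fun g => ⟨g * (r g)⁻¹, hr g⟩
  have hφ : ∀ (h : H) (g : G), φ ((h : G) * g) = h * φ g := by
    intro h g
    ext
    simp [φ, hrmul h g, mul_assoc]
  refine ⟨fun A => m.μ (φ ⁻¹' A), fun A => m.nonneg _, by simpa using m.total,
    fun A B hAB => ?_, fun h A => ?_⟩
  · show m.μ (φ ⁻¹' (A ∪ B)) = m.μ (φ ⁻¹' A) + m.μ (φ ⁻¹' B)
    rw [Set.preimage_union]
    exact m.additive _ _ (hAB.preimage φ)
  · show m.μ (φ ⁻¹' ((h * ·) '' A)) = m.μ (φ ⁻¹' A)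
    have hset : φ ⁻¹' ((h * ·) '' A) = ((h : G) * ·) '' (φ ⁻¹' A) := by
      ext x
      constructor
      · rintro ⟨a, ha, hax⟩
        refine ⟨(h : G)⁻¹ * x, ?_, by simp⟩
        have : φ ((h⁻¹ : H) * x) = h⁻¹ * φ x := hφ h⁻¹ x
        simp only [Set.mem_preimage]
        rw [show ((h⁻¹ : H) : G) = (h : G)⁻¹ by simp] at this
        rw [this, ← hax]
        simpa using ha
      · rintro ⟨y, hy, rfl⟩
        exact ⟨φ y, hy, (hφ h y).symm⟩
    rw [hset, m.invariant]

end LeftInvariantMean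

namespace FreeTwo

open FreeGroup

/-- Elements of the free group whose reduced word starts with letter `p`. -/
def S (p : Fin 2 × Bool) : Set (FreeGroup (Fin 2)) :=
  {x | x.toWord.head? = some p}

lemma S_disjoint {p q : Fin 2 × Bool} (h : p ≠ q) : Disjoint (S p) (S q) := by
  rw [Set.disjoint_left]
  intro x hp hq
  exact h (by have := hp.symm.trans hq; simpa using this)

lemma toWord_cons_mul (p : Fin 2 × Bool) (x : FreeGroup (Fin 2))
    (h : x.toWord.head? ≠ some (p.1, !p.2)) :
    (FreeGroup.mk [p] * x).toWord = p :: x.toWord := by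
  conv_lhs => rw [← FreeGroup.mk_toWord (x := x)]
  rw [FreeGroup.mul_mk, List.singleton_append, FreeGroup.toWord_mk, FreeGroup.reduce.cons,
    FreeGroup.reduce_toWord]
  rcases hw : x.toWord with _ | ⟨⟨j, c⟩, tl⟩
  · rfl
  · simp only [hw] at h
    have hcond : ¬ (p.1 = j ∧ p.2 = !c) := by
      rintro ⟨h1, h2⟩
      apply h
      simp only [List.head?_cons, Option.some.injEq]
      subst h1
      ext <;> simp [h2]
    simp [hcond]

lemma cover (i : Fin 2) :
    (Set.univ : Set (FreeGroup (Fin 2))) ⊆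
      S (i, true) ∪ ((FreeGroup.of i * ·) '' S (i, false)) := by
  intro x _
  by_cases hx : x.toWord.head? = some (i, true)
  · exact Or.inl hx
  · refine Or.inr ⟨FreeGroup.mk [(i, false)] * x, ?_, ?_⟩
    · have := toWord_cons_mul (i, false) x (by simpa using hx)
      simp [S, this]
    · show FreeGroup.of i * (FreeGroup.mk [(i, false)] * x) = x
      have : FreeGroup.of i * FreeGroup.mk [(i, false)] = 1 := by
        rw [show FreeGroup.of i = FreeGroup.mk [(i, true)] from rfl, FreeGroup.mul_mk,
          FreeGroup.one_eq_mk]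
        apply FreeGroup.reduce.exact
        simp
      rw [← mul_assoc, this, one_mul]

lemma not_amenable_freeGroup : ¬ IsAmenable (FreeGroup (Fin 2)) := by
  rintro ⟨m⟩
  have key : ∀ i : Fin 2, 1 ≤ m.μ (S (i, true)) + m.μ (S (i, false)) := by
    intro i
    have h1 : m.μ Set.univ ≤ m.μ (S (i, true) ∪ ((FreeGroup.of i * ·) '' S (i, false))) :=
      m.mono (cover i)
    have h2 := m.subadd (S (i, true)) ((FreeGroup.of i * ·) '' S (i, false))
    have h3 := m.invariant (FreeGroup.of i) (S (i, false))
    rw [m.total] at h1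
    linarith
  have hd1 : Disjoint (S ((0 : Fin 2), true)) (S ((0 : Fin 2), false)) :=
    S_disjoint (by simp)
  have hd2 : Disjoint (S ((0 : Fin 2), true) ∪ S ((0 : Fin 2), false))
      (S ((1 : Fin 2), true)) := by
    refine Disjoint.union_left ?_ ?_ <;> exact S_disjoint (by decide)
  have hd3 : Disjoint ((S ((0 : Fin 2), true) ∪ S ((0 : Fin 2), false)) ∪ S ((1 : Fin 2), true))
      (S ((1 : Fin 2), false)) := by
    refine Disjoint.union_left (Disjoint.union_left ?_ ?_) ?_ <;> exact S_disjoint (by decide)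
  have hsum : m.μ (((S ((0 : Fin 2), true) ∪ S ((0 : Fin 2), false)) ∪ S ((1 : Fin 2), true))
      ∪ S ((1 : Fin 2), false))
      = m.μ (S ((0 : Fin 2), true)) + m.μ (S ((0 : Fin 2), false))
        + m.μ (S ((1 : Fin 2), true)) + m.μ (S ((1 : Fin 2), false)) := by
    rw [m.additive _ _ hd3, m.additive _ _ hd2, m.additive _ _ hd1]
  have hle : m.μ (((S ((0 : Fin 2), true) ∪ S ((0 : Fin 2), false)) ∪ S ((1 : Fin 2), true))
      ∪ S ((1 : Fin 2), false)) ≤ 1 := by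
    have := m.mono (Set.subset_univ (((S ((0 : Fin 2), true) ∪ S ((0 : Fin 2), false))
      ∪ S ((1 : Fin 2), true)) ∪ S ((1 : Fin 2), false)))
    rwa [m.total] at this
  have k0 := key 0
  have k1 := key 1
  linarith [hsum ▸ hle]

end FreeTwo

/-- A group containing a free subgroup of rank 2 is not amenable. -/
theorem not_amenable_of_free_subgroup {G : Type*} [Group G]
    (H : Subgroup G) (e : H ≃* FreeGroup (Fin 2)) :
    ¬ IsAmenable G := by
  rintro ⟨m⟩
  exact FreeTwo.not_amenable_freeGroup ⟨(m.toSubgroup H).ofMulEquiv e⟩
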